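/- For k ≥ 1, let g = x_1^2 + x_2^2 + x_3^{k+1} + x_4^{2k+2} with weights (k+1, k+1, 2, 1) for (x_1,x_2,x_3,x_4), so g is weighted homogeneous of degree d = 2k+2 with weight sum w = 2k+5. Let R be the Jacobian ring of g. Then dim_C R_{d-w} = dim_C R_{-3} = 0, dim_C R_{3d-w} = dim_C R_{4k+1} = 0, and dim_C R_{2d-w} = dim_C R_{2k-1} = k, the latter space being spanned by the classes of monomials x_3^i x_4^j with 2i + j = 2k - 1. -/

import Mathlib

/-!
The partial derivatives of the Fermat-type polynomial `g` are, up to nonzero scalars, the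
pure powers `x₁, x₂, x₃^k, x₄^{2k+1}`, so the Jacobian ideal is a monomial ideal. Modulo
such an ideal the classes of the monomials divisible by none of its generators form a
basis, so each graded piece has as basis the classes of the monomials `x₃^i x₄^j` with
`i < k`, `j ≤ 2k` and weight `2i + j` equal to the given degree. No such exponents have
weight `-3` or `4k+1`, and those of weight `2k - 1` are the `k` pairs `(i, 2k - 1 - 2i)`,
`0 ≤ i < k`.
-/

open MvPolynomial

theorem Ideal.span_range_mul_of_isUnit {ι R : Type*} [CommSemiring R] {u : ι → R}
    (hu : ∀ i, IsUnit (u i)) (f : ι → R) :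
    Ideal.span (Set.range fun i => u i * f i) = Ideal.span (Set.range f) := by
  refine le_antisymm (Ideal.span_le.2 ?_) (Ideal.span_le.2 ?_) <;> rintro _ ⟨i, rfl⟩
  · exact Ideal.mul_mem_left _ _ (Ideal.subset_span ⟨i, rfl⟩)
  · obtain ⟨v, hv⟩ := hu i
    rw [← v.inv_mul_cancel_left (f i), hv]
    exact Ideal.mul_mem_left _ _ (Ideal.subset_span ⟨i, rfl⟩)

theorem LinearIndepOn.finrank_span_image_eq_ncard {ι K V : Type*} [DivisionRing K]
    [AddCommGroup V] [Module K V] {v : ι → V} {s : Set ι} (hv : LinearIndepOn K v s) :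
    Module.finrank K (Submodule.span K (v '' s)) = s.ncard :=
  congrArg ENat.toNat (toENat_rank_span_set hv)

theorem Finsupp.single_add_single_injective {α M : Type*} [AddZeroClass M] {i j : α}
    (hij : i ≠ j) : Function.Injective fun p : M × M => single i p.1 + single j p.2 := by
  intro p q h
  have hi := DFunLike.congr_fun h i
  have hj := DFunLike.congr_fun h j
  simp only [Finsupp.add_apply, Finsupp.single_eq_same, Finsupp.single_eq_of_ne hij,
    Finsupp.single_eq_of_ne hij.symm, add_zero, zero_add] at hi hj
  exact Prod.ext hi hj

theorem ncard_setOf_two_mul_add_eq (m : ℕ) :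
    {p : ℕ × ℕ | 2 * p.1 + p.2 = m}.ncard = m / 2 + 1 := by
  have hset : {p : ℕ × ℕ | 2 * p.1 + p.2 = m} =
      (fun a => (a, m - 2 * a)) '' Set.Iio (m / 2 + 1) := by
    ext ⟨a, b⟩
    simp only [Set.mem_ofPred_eq, Set.mem_image, Set.mem_Iio, Prod.mk.injEq]
    constructor
    · intro h
      exact ⟨a, by omega, rfl, by omega⟩
    · rintro ⟨a, ha, rfl, rfl⟩
      omega
  rw [hset, Set.ncard_image_of_injective _ (fun a b h => (Prod.mk.inj h).1), ← Finset.coe_range,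
    Set.ncard_coe_finset, Finset.card_range]

namespace MvPolynomial

variable {σ R : Type*}

section CommSemiring

variable [CommSemiring R]

noncomputable def purePowerIdeal (n : σ → ℕ) : Ideal (MvPolynomial σ R) :=
  Ideal.span (Set.range fun i => X i ^ n i)

variable {n : σ → ℕ}

theorem mem_purePowerIdeal_iff {p : MvPolynomial σ R} :
    p ∈ purePowerIdeal n ↔ ∀ d ∈ p.support, ∃ i, n i ≤ d i := by
  have hgen : (Set.range fun i => (X i ^ n i : MvPolynomial σ R)) =
      (fun d => monomial d (1 : R)) '' Set.range fun i => Finsupp.single i (n i) := by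
    rw [← Set.range_comp]
    simp [Function.comp_def, X_pow_eq_monomial]
  rw [purePowerIdeal, hgen, mem_ideal_span_monomial_image]
  simp [Finsupp.single_le_iff]

theorem monomial_mem_purePowerIdeal {d : σ →₀ ℕ} (hd : ∃ i, n i ≤ d i) (c : R) :
    monomial d c ∈ purePowerIdeal n :=
  mem_purePowerIdeal_iff.2 fun _ he => Finset.mem_singleton.1 (support_monomial_subset he) ▸ hd

theorem pderiv_sum_X_pow_succ [Fintype σ] (a : σ → ℕ) (i : σ) :
    pderiv i (∑ j, X j ^ (a j + 1) : MvPolynomial σ R) =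
      ((a i + 1 : ℕ) : MvPolynomial σ R) * X i ^ a i := by
  classical
  simp [pderiv_X, Pi.single_apply]

end CommSemiring

theorem span_range_pderiv_sum_X_pow_succ {K : Type*} [Field K] [CharZero K] [Fintype σ]
    (a : σ → ℕ) :
    Ideal.span (Set.range fun i => pderiv i (∑ j, X j ^ (a j + 1) : MvPolynomial σ K)) =
      purePowerIdeal a := by
  simp_rw [pderiv_sum_X_pow_succ]
  refine Ideal.span_range_mul_of_isUnit (fun i => ?_) _
  rw [← map_natCast (C : K →+* MvPolynomial σ K)]
  exact (isUnit_iff_ne_zero.2 (Nat.cast_ne_zero.2 (Nat.succ_ne_zero _))).map C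

section CommRing

variable [CommRing R] (n : σ → ℕ)

theorem linearIndepOn_mk_monomial_purePowerIdeal :
    LinearIndepOn R (fun d => Ideal.Quotient.mk (purePowerIdeal n) (monomial d (1 : R)))
      {d | ∀ i, d i < n i} := by
  rw [linearIndepOn_iff]
  intro l hl hzero
  set p := Finsupp.linearCombination R (fun d => monomial d (1 : R)) l
  have hcoeff (d : σ →₀ ℕ) : coeff d p = l d := by
    classical
    simp only [p, Finsupp.linearCombination_apply, Finsupp.sum, coeff_sum, coeff_smul,
      coeff_monomial, smul_eq_mul, mul_ite, mul_one, mul_zero, Finset.sum_ite_eq']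
    split_ifs with hd
    · rfl
    · exact (Finsupp.notMem_support_iff.1 hd).symm
  have hp : p ∈ purePowerIdeal n := by
    rw [← Ideal.Quotient.eq_zero_iff_mem, ← Ideal.Quotient.mkₐ_eq_mk R,
      ← AlgHom.toLinearMap_apply, Finsupp.apply_linearCombination]
    exact hzero
  ext d
  by_contra hd
  obtain ⟨i, hi⟩ := mem_purePowerIdeal_iff.1 hp d (mem_support_iff.2 (by rwa [hcoeff]))
  exact (hl (Finsupp.mem_support_iff.2 hd) i).not_ge hi

theorem map_weightedHomogeneousSubmodule_mk_purePowerIdeal {M : Type*} [AddCommMonoid M]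
    (w : σ → M) (m : M) :
    (weightedHomogeneousSubmodule R w m).map
        (Ideal.Quotient.mkₐ R (purePowerIdeal n)).toLinearMap =
      Submodule.span R ((fun d => Ideal.Quotient.mk (purePowerIdeal n) (monomial d (1 : R))) ''
        {d | (∀ i, d i < n i) ∧ Finsupp.weight w d = m}) := by
  apply le_antisymm
  · rintro _ ⟨p, hp, rfl⟩
    rw [AlgHom.toLinearMap_apply, Ideal.Quotient.mkₐ_eq_mk, p.as_sum, map_sum]
    refine Submodule.sum_mem _ fun d hd => ?_
    by_cases hstd : ∀ i, d i < n i
    · have hsmul : Ideal.Quotient.mk (purePowerIdeal n) (monomial d (coeff d p)) =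
          coeff d p • Ideal.Quotient.mk (purePowerIdeal n) (monomial d (1 : R)) := by
        rw [← Ideal.Quotient.mkₐ_eq_mk R, ← map_smul, smul_monomial, smul_eq_mul, mul_one]
      rw [hsmul]
      exact Submodule.smul_mem _ _
        (Submodule.subset_span ⟨d, ⟨hstd, hp (mem_support_iff.1 hd)⟩, rfl⟩)
    · push Not at hstd
      rw [Ideal.Quotient.eq_zero_iff_mem.2 (monomial_mem_purePowerIdeal hstd _)]
      exact Submodule.zero_mem _
  · rw [Submodule.span_le]
    rintro _ ⟨d, ⟨-, hd⟩, rfl⟩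
    exact ⟨monomial d 1, isWeightedHomogeneous_monomial _ _ _ hd, rfl⟩

end CommRing

end MvPolynomial

theorem weight_single_two_add_single_three (k a b : ℕ) :
    Finsupp.weight ![(k : ℤ) + 1, (k : ℤ) + 1, 2, 1]
      (Finsupp.single 2 a + Finsupp.single 3 b) = 2 * a + b := by
  simp only [Finsupp.weight_eq_sum, Fin.sum_univ_four, Finsupp.coe_add, Pi.add_apply,
    Finsupp.single_apply, Int.nsmul_eq_mul, Nat.cast_add, Nat.cast_ite, Nat.cast_zero,
    Fin.reduceEq, ↓reduceIte, add_zero, zero_add, Matrix.cons_val_zero, Matrix.cons_val_one,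
    Matrix.cons_val, zero_mul, mul_one, add_left_inj]
  ring

theorem setOf_lt_and_weight_eq_image (k : ℕ) (m : ℤ) :
    {d : Fin 4 →₀ ℕ | (∀ i, d i < ![1, 1, k, 2 * k + 1] i) ∧
        Finsupp.weight ![(k : ℤ) + 1, (k : ℤ) + 1, 2, 1] d = m} =
      (fun p : ℕ × ℕ => Finsupp.single 2 p.1 + Finsupp.single 3 p.2) ''
        {p | p.1 < k ∧ p.2 < 2 * k + 1 ∧ 2 * (p.1 : ℤ) + p.2 = m} := by
  ext d
  constructor
  · rintro ⟨hd, rfl⟩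
    have h0 := hd 0
    have h1 := hd 1
    have h2 := hd 2
    have h3 := hd 3
    simp only [Matrix.cons_val_zero, Matrix.cons_val_one, Matrix.cons_val, Order.lt_one_iff,
      Order.lt_add_one_iff] at h0 h1 h2 h3
    have hd : d = Finsupp.single 2 (d 2) + Finsupp.single 3 (d 3) := by
      ext i
      fin_cases i <;> simp [h0, h1]
    refine ⟨(d 2, d 3), ⟨h2, Nat.lt_succ_of_le h3, ?_⟩, hd.symm⟩
    rw [hd, weight_single_two_add_single_three]
    simp
  · rintro ⟨⟨a, b⟩, ⟨ha, hb, rfl⟩, rfl⟩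
    refine ⟨fun i => ?_, weight_single_two_add_single_three k a b⟩
    fin_cases i <;> simp [ha, hb]

/-- **Graded Jacobian ring of `x₁² + x₂² + x₃^{k+1} + x₄^{2k+2}`.**
For `k ≥ 1`, with weights `(k+1, k+1, 2, 1)` the polynomial `g` is weighted
homogeneous of degree `d = 2k+2`, with weight sum `w = 2k+5`.  For its Jacobian
ring `R`: `R_{d-w} = R_{-3} = 0`, `R_{3d-w} = R_{4k+1} = 0`, and
`R_{2d-w} = R_{2k-1}` has dimension `k`, being spanned by the classes of the
monomials `x₃^i x₄^j` with `2i + j = 2k - 1`.  (We use `ℤ`-valued weights so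
that the negative degree `-3` makes sense.) -/
theorem jacobian_ring_Ak_surface (k : ℕ) (hk : 1 ≤ k) :
    let g : MvPolynomial (Fin 4) ℂ :=
      X 0 ^ 2 + X 1 ^ 2 + X 2 ^ (k + 1) + X 3 ^ (2 * k + 2)
    let I : Ideal (MvPolynomial (Fin 4) ℂ) :=
      Ideal.span (Set.range fun i => pderiv i g)
    let w : Fin 4 → ℤ := ![(k : ℤ) + 1, (k : ℤ) + 1, 2, 1]
    let piece : ℤ → Submodule ℂ (MvPolynomial (Fin 4) ℂ ⧸ I) := fun m =>
      (weightedHomogeneousSubmodule ℂ w m).map (Ideal.Quotient.mkₐ ℂ I).toLinearMap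
    piece (-3) = ⊥ ∧ piece (4 * (k : ℤ) + 1) = ⊥ ∧
      Module.finrank ℂ (piece (2 * (k : ℤ) - 1)) = k ∧
      piece (2 * (k : ℤ) - 1) =
        Submodule.span ℂ
          ((fun p : ℕ × ℕ => Ideal.Quotient.mk I (X 2 ^ p.1 * X 3 ^ p.2)) ''
            {p : ℕ × ℕ | 2 * p.1 + p.2 = 2 * k - 1}) := by
  intro g I w piece
  have hI : I = purePowerIdeal ![1, 1, k, 2 * k + 1] := by
    have hg : g = ∑ j, X j ^ (![1, 1, k, 2 * k + 1] j + 1) := by simp [g, Fin.sum_univ_four]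
    rw [← span_range_pderiv_sum_X_pow_succ, ← hg]
  clear_value I
  subst hI
  set P : ℤ → Set (ℕ × ℕ) := fun m =>
    {p | p.1 < k ∧ p.2 < 2 * k + 1 ∧ 2 * (p.1 : ℤ) + p.2 = m}
  set e := fun p : ℕ × ℕ => Finsupp.single (2 : Fin 4) p.1 + Finsupp.single 3 p.2
  set v := fun d => Ideal.Quotient.mk (purePowerIdeal ![1, 1, k, 2 * k + 1]) (monomial d (1 : ℂ))
  have hpiece (m : ℤ) : piece m = Submodule.span ℂ (v '' (e '' P m)) := by
    rw [← setOf_lt_and_weight_eq_image]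
    exact map_weightedHomogeneousSubmodule_mk_purePowerIdeal _ _ m
  have hstd (m : ℤ) : e '' P m ⊆ {d | ∀ i, d i < ![1, 1, k, 2 * k + 1] i} := by
    rw [← setOf_lt_and_weight_eq_image]
    exact fun d hd => hd.1
  have hP_empty (m : ℤ) (hm : m < 0 ∨ 4 * k < m) : P m = ∅ := by
    ext p
    simp only [P, Set.mem_ofPred_eq, Set.mem_empty_iff_false, iff_false]
    omega
  -- `hk` makes the truncated `2 * k - 1 : ℕ` agree with the integer degree.
  have hP_mid : P (2 * k - 1) = {p | 2 * p.1 + p.2 = 2 * k - 1} := by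
    ext p
    simp only [P, Set.mem_ofPred_eq]
    omega
  refine ⟨?_, ?_, ?_, ?_⟩
  · rw [hpiece, hP_empty _ (by omega)]
    simp
  · rw [hpiece, hP_empty _ (by omega)]
    simp
  · rw [hpiece,
      ((linearIndepOn_mk_monomial_purePowerIdeal _).mono (hstd _)).finrank_span_image_eq_ncard,
      Set.ncard_image_of_injective _ (Finsupp.single_add_single_injective (by decide)), hP_mid,
      ncard_setOf_two_mul_add_eq]
    omega
  · rw [hpiece, hP_mid, Set.image_image]
    congr 2
    funext p
    simp [v, e, X_pow_eq_monomial, monomial_mul]
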